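/- arXiv:2310.13835 — 8 statements merged into one kernel-verified Lean document; each statement's English description precedes it below -/
import Mathlib

section
/- Let P be a finite lattice and R a transfer system on P. Then the characteristic function χ^R : P → P, sending x to the least element of x↓_R = {y ∈ P | y R x}, is monotone: x ≤ y implies χ^R(x) ≤ χ^R(y). -/
/-- A transfer system on a lattice `P`: a partial order refining `≤`
(reflexive, transitive, and refining `≤`, hence antisymmetric) that is
closed under restriction. -/
structure TransferSystem (P : Type*) [Lattice P] where
  rel : P → P → Prop
  refl : ∀ x, rel x x
  trans : ∀ x y z, rel x y → rel y z → rel x z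
  le_of_rel : ∀ x y, rel x y → x ≤ y
  restrict : ∀ x y z, rel x z → y ≤ z → rel (x ⊓ y) y

theorem stmt1_general {P : Type*} [Lattice P] (R : TransferSystem P) (χ : P → P)
    (hχ : ∀ x, IsLeast {y : P | R.rel y x} (χ x)) :
    Monotone χ := by
  intro x y hxy
  have hmem : R.rel (χ y ⊓ x) x := R.restrict _ _ _ (hχ y).1 hxy
  exact ((hχ x).2 hmem).trans inf_le_left

/-- the characteristic function of a transfer system on a finite
lattice (sending each x to the least element of its R-downset) is monotone. -/
theorem stmt1 {P : Type*} [Lattice P] [Finite P] (R : TransferSystem P) (χ : P → P)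
    (hχ : ∀ x, IsLeast {y : P | R.rel y x} (χ x)) :
    Monotone χ :=
  stmt1_general R χ hχ
end

section
/- Let P be a finite lattice. For every transfer system R on P, the characteristic function χ^R is an interior operator on P; conversely, for every interior operator f on P there exists a transfer system R on P with χ^R = f. That is, the image of the map χ : Tr(P) → End(P), R ↦ χ^R, is exactly the set End°(P) of interior operators on P. -/
/-!
For a transfer system `R`, restricting `χ y R y` along `x ≤ y` gives `(χ y ⊓ x) R x`, so
`χ x ≤ χ y`; transitivity gives `χ (χ x) R x`, hence idempotence. Conversely an interior
operator `f` is the characteristic function of the relation `a R b ↔ f b ≤ a ≤ b`.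
-/

namespace TransferSystem

variable {P : Type*} [Lattice P]

section CharacteristicFunction

variable (R : TransferSystem P) {χ : P → P} (hχ : ∀ x, IsLeast {y | R.rel y x} (χ x))
include hχ

theorem le_of_isLeast (x : P) : χ x ≤ x :=
  R.le_of_rel _ _ (hχ x).1

theorem monotone_of_isLeast : Monotone χ := fun x y hxy =>
  calc χ x ≤ χ y ⊓ x := (hχ x).2 (R.restrict _ _ _ (hχ y).1 hxy)
    _ ≤ χ y := inf_le_left

theorem idem_of_isLeast (x : P) : χ (χ x) = χ x :=
  le_antisymm ((hχ _).2 (R.refl _)) ((hχ x).2 (R.trans _ _ _ (hχ (χ x)).1 (hχ x).1))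

end CharacteristicFunction

def ofInterior (f : P → P) (hmono : Monotone f) (hidem : ∀ x, f (f x) = f x)
    (hcontr : ∀ x, f x ≤ x) : TransferSystem P where
  rel a b := f b ≤ a ∧ a ≤ b
  refl x := ⟨hcontr x, le_rfl⟩
  trans x y z hxy hyz :=
    ⟨calc f z = f (f z) := (hidem z).symm
        _ ≤ f y := hmono hyz.1
        _ ≤ x := hxy.1,
      hxy.2.trans hyz.2⟩
  le_of_rel _ _ h := h.2
  restrict _ y _ hxz hyz := ⟨le_inf ((hmono hyz).trans hxz.1) (hcontr y), inf_le_right⟩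

theorem isLeast_ofInterior (f : P → P) (hmono : Monotone f) (hidem : ∀ x, f (f x) = f x)
    (hcontr : ∀ x, f x ≤ x) (x : P) :
    IsLeast {y | (ofInterior f hmono hidem hcontr).rel y x} (f x) :=
  ⟨⟨le_rfl, hcontr x⟩, fun _ hy => hy.1⟩

end TransferSystem

theorem stmt4_general (P : Type*) [Lattice P] :
    (∀ (R : TransferSystem P) (χ : P → P),
        (∀ x, IsLeast {y : P | R.rel y x} (χ x)) →
        Monotone χ ∧ (∀ x, χ (χ x) = χ x) ∧ (∀ x, χ x ≤ x)) ∧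
    (∀ f : P → P, Monotone f → (∀ x, f (f x) = f x) → (∀ x, f x ≤ x) →
        ∃ R : TransferSystem P, ∀ x, IsLeast {y : P | R.rel y x} (f x)) :=
  ⟨fun R _ hχ => ⟨R.monotone_of_isLeast hχ, R.idem_of_isLeast hχ, R.le_of_isLeast hχ⟩,
    fun f hmono hidem hcontr =>
      ⟨.ofInterior f hmono hidem hcontr, TransferSystem.isLeast_ofInterior f hmono hidem hcontr⟩⟩

/-- the image of the characteristic map χ : Tr(P) → End(P) is
exactly the set of interior operators on P: every characteristic function of
a transfer system is monotone, idempotent, and contractive, and conversely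
every interior operator arises as the characteristic function of some
transfer system. -/
theorem stmt4 (P : Type*) [Lattice P] [Finite P] :
    (∀ (R : TransferSystem P) (χ : P → P),
        (∀ x, IsLeast {y : P | R.rel y x} (χ x)) →
        Monotone χ ∧ (∀ x, χ (χ x) = χ x) ∧ (∀ x, χ x ≤ x)) ∧
    (∀ f : P → P, Monotone f → (∀ x, f (f x) = f x) → (∀ x, f x ≤ x) →
        ∃ R : TransferSystem P, ∀ x, IsLeast {y : P | R.rel y x} (f x)) :=
  stmt4_general P
end

section
/- Let P be a finite lattice and let R, R' be transfer systems on P with χ^R = χ^{R'}. Then χ^{R ∨ R'} = χ^R = χ^{R'}, where R ∨ R' denotes the join of R and R' in the lattice Tr(P) of transfer systems (i.e., the least transfer system containing both R and R'). -/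
namespace TransferSystem

variable {P : Type*} [Lattice P]

def IsCharFun (R : TransferSystem P) (χ : P → P) : Prop :=
  ∀ x, IsLeast {y : P | R.rel y x} (χ x)

def ofInteriorOp (f : P → P) (hle : ∀ x, f x ≤ x) (hmono : Monotone f)
    (hidem : ∀ x, f (f x) = f x) : TransferSystem P where
  rel a b := a ≤ b ∧ f a = f b
  refl _ := ⟨le_rfl, rfl⟩
  trans _ _ _ hab hbc := ⟨hab.1.trans hbc.1, hab.2.trans hbc.2⟩
  le_of_rel _ _ h := h.1
  restrict a b c hac hbc := by
    refine ⟨inf_le_right, le_antisymm (hmono inf_le_right) ?_⟩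
    have hb : f b ≤ a ⊓ b :=
      le_inf ((hmono hbc).trans (hac.2.symm.le.trans (hle a))) (hle b)
    calc f b = f (f b) := (hidem b).symm
      _ ≤ f (a ⊓ b) := hmono hb

namespace IsCharFun

variable {R S : TransferSystem P} {χ χS : P → P}

theorem rel_apply (hχ : R.IsCharFun χ) (x : P) : R.rel (χ x) x := (hχ x).1

theorem apply_le (hχ : R.IsCharFun χ) (x : P) : χ x ≤ x := R.le_of_rel _ _ (hχ.rel_apply x)

theorem monotone (hχ : R.IsCharFun χ) : Monotone χ := fun a b hab =>
  ((hχ a).2 (R.restrict _ _ _ (hχ.rel_apply b) hab)).trans inf_le_left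

theorem apply_apply (hχ : R.IsCharFun χ) (x : P) : χ (χ x) = χ x :=
  le_antisymm (hχ.apply_le _) ((hχ x).2 (R.trans _ _ _ (hχ.rel_apply _) (hχ.rel_apply x)))

theorem apply_eq_of_rel (hχ : R.IsCharFun χ) {a b : P} (h : R.rel a b) : χ a = χ b :=
  le_antisymm (hχ.monotone (R.le_of_rel _ _ h)) ((hχ b).2 (R.trans _ _ _ (hχ.rel_apply a) h))

def maxTransferSystem (hχ : R.IsCharFun χ) : TransferSystem P :=
  ofInteriorOp χ hχ.apply_le hχ.monotone hχ.apply_apply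

theorem rel_maxTransferSystem {R' : TransferSystem P} (hχ : R.IsCharFun χ)
    (hχ' : R'.IsCharFun χ) {a b : P} (h : R'.rel a b) : hχ.maxTransferSystem.rel a b :=
  ⟨R'.le_of_rel _ _ h, hχ'.apply_eq_of_rel h⟩

theorem apply_le_of_rel_imp (hχ : R.IsCharFun χ) (hχS : S.IsCharFun χS)
    (hRS : ∀ x y, R.rel x y → S.rel x y) (x : P) : χS x ≤ χ x :=
  (hχS x).2 (hRS _ _ (hχ.rel_apply x))

theorem eq_of_rel_imp_maxTransferSystem (hχ : R.IsCharFun χ) (hχS : S.IsCharFun χS)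
    (hRS : ∀ x y, R.rel x y → S.rel x y)
    (hSmax : ∀ x y, S.rel x y → hχ.maxTransferSystem.rel x y) : χS = χ := by
  funext x
  refine le_antisymm (hχ.apply_le_of_rel_imp hχS hRS x) ?_
  calc χ x = χ (χS x) := (hSmax _ _ (hχS.rel_apply x)).2.symm
    _ ≤ χS x := hχ.apply_le _

end IsCharFun

end TransferSystem

theorem stmt5_general {P : Type*} [Lattice P] (R R' S : TransferSystem P)
    (hSR : ∀ x y, R.rel x y → S.rel x y)
    (hSleast : ∀ T : TransferSystem P, (∀ x y, R.rel x y → T.rel x y) →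
        (∀ x y, R'.rel x y → T.rel x y) → ∀ x y, S.rel x y → T.rel x y)
    (χR χR' χS : P → P)
    (hχR : ∀ x, IsLeast {y : P | R.rel y x} (χR x))
    (hχR' : ∀ x, IsLeast {y : P | R'.rel y x} (χR' x))
    (hχS : ∀ x, IsLeast {y : P | S.rel y x} (χS x))
    (heq : χR = χR') :
    χS = χR ∧ χS = χR' := by
  subst heq
  have hχR : R.IsCharFun χR := hχR
  have hSmax : ∀ x y, S.rel x y → hχR.maxTransferSystem.rel x y :=
    hSleast _ (fun _ _ => hχR.rel_maxTransferSystem hχR)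
      (fun _ _ => hχR.rel_maxTransferSystem hχR')
  have hS : χS = χR := hχR.eq_of_rel_imp_maxTransferSystem hχS hSR hSmax
  exact ⟨hS, hS⟩

/-- if two transfer systems R, R' on a finite lattice have the
same characteristic function, then so does their join R ∨ R' in Tr(P)
(the least transfer system containing both). -/
theorem stmt5 {P : Type*} [Lattice P] [Finite P] (R R' S : TransferSystem P)
    (hSR : ∀ x y, R.rel x y → S.rel x y)
    (hSR' : ∀ x y, R'.rel x y → S.rel x y)
    (hSleast : ∀ T : TransferSystem P, (∀ x y, R.rel x y → T.rel x y) →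
        (∀ x y, R'.rel x y → T.rel x y) → ∀ x y, S.rel x y → T.rel x y)
    (χR χR' χS : P → P)
    (hχR : ∀ x, IsLeast {y : P | R.rel y x} (χR x))
    (hχR' : ∀ x, IsLeast {y : P | R'.rel y x} (χR' x))
    (hχS : ∀ x, IsLeast {y : P | S.rel y x} (χS x))
    (heq : χR = χR') :
    χS = χR ∧ χS = χR' :=
  stmt5_general R R' S hSR hSleast χR χR' χS hχR hχR' hχS heq
end

section
/- Let P be a finite lattice and let R, R' be transfer systems on P with χ^R = χ^{R'}. Then χ^{R ∧ R'} = χ^R = χ^{R'}, where R ∧ R' is the meet of R and R' in Tr(P), given by intersection of relations: x (R ∧ R') y iff x R y and x R' y. -/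
theorem IsLeast.inter_of_mem {α : Type*} [Preorder α] {s t : Set α} {a : α}
    (hs : IsLeast s a) (ht : a ∈ t) : IsLeast (s ∩ t) a :=
  ⟨⟨hs.1, ht⟩, fun _ hb => hs.2 hb.1⟩

theorem stmt7_general {P : Type*} [Lattice P] (R R' T : TransferSystem P)
    (hT : ∀ x y, T.rel x y ↔ R.rel x y ∧ R'.rel x y)
    (χR χR' χT : P → P)
    (hχR : ∀ x, IsLeast {y : P | R.rel y x} (χR x))
    (hχR' : ∀ x, IsLeast {y : P | R'.rel y x} (χR' x))
    (hχT : ∀ x, IsLeast {y : P | T.rel y x} (χT x))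
    (heq : χR = χR') :
    χT = χR ∧ χT = χR' := by
  have hχT_eq : χT = χR := funext fun x => by
    have hdown : {y | T.rel y x} = {y | R.rel y x} ∩ {y | R'.rel y x} :=
      Set.ext fun y => hT y x
    have hmem' : χR x ∈ {y | R'.rel y x} := heq ▸ (hχR' x).1
    exact (hχT x).unique (hdown ▸ (hχR x).inter_of_mem hmem')
  exact ⟨hχT_eq, hχT_eq.trans heq⟩

/-- if transfer systems R, R' on a finite lattice have the same
characteristic function, then so does their meet R ∧ R' in Tr(P), which is
given by intersection of relations. -/
theorem stmt7 {P : Type*} [Lattice P] [Finite P] (R R' T : TransferSystem P)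
    (hT : ∀ x y, T.rel x y ↔ R.rel x y ∧ R'.rel x y)
    (χR χR' χT : P → P)
    (hχR : ∀ x, IsLeast {y : P | R.rel y x} (χR x))
    (hχR' : ∀ x, IsLeast {y : P | R'.rel y x} (χR' x))
    (hχT : ∀ x, IsLeast {y : P | T.rel y x} (χT x))
    (heq : χR = χR') :
    χT = χR ∧ χT = χR' :=
  stmt7_general R R' T hT χR χR' χT hχR hχR' hχT heq
end

section
/- Let P be a finite lattice and R a transfer system on P. The fiber {R' ∈ Tr(P) | χ^{R'} = χ^R} has a least element in the refinement order, namely the transfer system ⟨{(x, y) | χ^R(y) = x or x = y}⟩ generated by the pairs (χ^R(y), y) together with all diagonal pairs. -/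
namespace TransferSystem

variable {P : Type*} [Lattice P]

theorem rel_of_isLeast {T : TransferSystem P} {χ : P → P}
    (hχ : ∀ x, IsLeast {y : P | T.rel y x} (χ x)) {x y : P} (h : χ y = x ∨ x = y) :
    T.rel x y := by
  rcases h with rfl | rfl
  · exact (hχ y).1
  · exact T.refl x

theorem isLeast_of_rel_imp {S T : TransferSystem P} (hST : ∀ x y, S.rel x y → T.rel x y)
    {χ : P → P} (hT : ∀ x, IsLeast {y : P | T.rel y x} (χ x)) (hS : ∀ x, S.rel (χ x) x)
    (x : P) :
    IsLeast {y : P | S.rel y x} (χ x) :=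
  ⟨hS x, fun y hy => (hT x).2 (hST y x hy)⟩

end TransferSystem

theorem stmt8_general {P : Type*} [Lattice P] (R : TransferSystem P) (χ : P → P)
    (hχ : ∀ x, IsLeast {y : P | R.rel y x} (χ x))
    (Rt : TransferSystem P)
    (hgen : ∀ x y : P, (χ y = x ∨ x = y) → Rt.rel x y)
    (hgenleast : ∀ S : TransferSystem P, (∀ x y : P, (χ y = x ∨ x = y) → S.rel x y) →
        ∀ x y, Rt.rel x y → S.rel x y) :
    (∀ x, IsLeast {y : P | Rt.rel y x} (χ x)) ∧
    (∀ T : TransferSystem P, (∀ x, IsLeast {y : P | T.rel y x} (χ x)) →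
        ∀ x y, Rt.rel x y → T.rel x y) := by
  have hRt_le_fiber : ∀ T : TransferSystem P, (∀ x, IsLeast {y : P | T.rel y x} (χ x)) →
      ∀ x y, Rt.rel x y → T.rel x y :=
    fun T hT => hgenleast T fun _ _ => TransferSystem.rel_of_isLeast hT
  refine ⟨TransferSystem.isLeast_of_rel_imp (hRt_le_fiber R hχ) hχ fun x => ?_, hRt_le_fiber⟩
  exact hgen (χ x) x (Or.inl rfl)

/-- the fiber of the characteristic map containing R has a least
element, namely the transfer system generated by the pairs (χ^R(y), y)
together with all diagonal pairs. -/
theorem stmt8 {P : Type*} [Lattice P] [Finite P] (R : TransferSystem P) (χ : P → P)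
    (hχ : ∀ x, IsLeast {y : P | R.rel y x} (χ x))
    (Rt : TransferSystem P)
    (hgen : ∀ x y : P, (χ y = x ∨ x = y) → Rt.rel x y)
    (hgenleast : ∀ S : TransferSystem P, (∀ x y : P, (χ y = x ∨ x = y) → S.rel x y) →
        ∀ x y, Rt.rel x y → S.rel x y) :
    (∀ x, IsLeast {y : P | Rt.rel y x} (χ x)) ∧
    (∀ T : TransferSystem P, (∀ x, IsLeast {y : P | T.rel y x} (χ x)) →
        ∀ x y, Rt.rel x y → T.rel x y) :=
  stmt8_general R χ hχ Rt hgen hgenleast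
end

section
/- For integers m, n ≥ 1, the number of transfer systems on the fusion [m] * [n] of the total orders [m] = {0 < 1 < ⋯ < m} and [n] = {0 < 1 < ⋯ < n} is |Tr([m]*[n])| = 2·Cat(n)·Cat(m) + Cat(n−1)·(Cat(m+1) − 2·Cat(m)) + Cat(m−1)·(Cat(n+1) − 2·Cat(n)), where Cat(k) = (1/(k+1))·binom(2k, k) is the k-th Catalan number. In particular, |Tr([n]*[n])| = 2·(Cat(n)² + Cat(n−1)·(Cat(n+1) − 2·Cat(n))). -/
/-!
A transfer system on the fusion `[m] * [n]` is determined by its restrictions `A` and `B` to the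
two chains, and a pair `(A, B)` arises in this way exactly when `⊥ A ⊤ ↔ ⊥ B ⊤` and, whenever
some `x ≠ ⊤` of one chain transfers to `⊤`, the bottom of the other chain transfers to each of
its non-top elements `y`: restricting `x → ⊤` along `y` gives `⊥ → y`, because `⊥` is the only
common lower bound of `x` and `y`.

Transfer systems on a chain with `k` elements are counted by `Cat(k)`, by decomposing at the
least element that transfers to the top. On `[k]`, those with `⊥ → ⊤` and those with an isolated
top are each counted by `Cat(k)`, and those with an isolated top in which `⊥` transfers to every
non-top element by `Cat(k - 1)`. In a compatible pair either both tops are isolated, or both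
sides have `⊥ → ⊤`, or exactly one top is isolated and the other side has neither property.
-/

/-- A transfer system on a poset that need not have binary meets: a partial
order refining `≤` such that `x R y` and `z ≤ y` imply `w R z` for every
maximal common lower bound `w` of `x` and `z`. This agrees with the lattice
definition when meets exist. -/
structure TransferSystemPoset (P : Type*) [PartialOrder P] where
  rel : P → P → Prop
  refl : ∀ x, rel x x
  trans : ∀ x y z, rel x y → rel y z → rel x z
  le_of_rel : ∀ x y, rel x y → x ≤ y
  restrict : ∀ x y z w, rel x y → z ≤ y → w ≤ x → w ≤ z →
    (∀ v, v ≤ x → v ≤ z → w ≤ v → v = w) → rel w z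

theorem and_and_iff_of_imp_iff {c a b r s : Prop} (h : a → b → (c ↔ r ∧ s)) :
    (c ∧ a) ∧ b ↔ (a ∧ r) ∧ (b ∧ s) :=
  ⟨fun ⟨⟨hc, ha⟩, hb⟩ => ⟨⟨ha, ((h ha hb).mp hc).1⟩, hb, ((h ha hb).mp hc).2⟩,
    fun ⟨⟨ha, hr⟩, hb, hs⟩ => ⟨⟨(h ha hb).mpr ⟨hr, hs⟩, ha⟩, hb⟩⟩

theorem le_apply_min {α F : Type*} [LinearOrder α] [Preorder F] (i : α → F) {v : F} {a c : α}
    (ha : v ≤ i a) (hc : v ≤ i c) : v ≤ i (min a c) := by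
  rcases min_choice a c with h | h <;> rw [h] <;> assumption

section Card

variable {γ δ : Type*}

theorem Nat.card_eq_card_subtype_add_card_subtype_not [Finite γ] (q : γ → Prop) :
    Nat.card γ = Nat.card {x // q x} + Nat.card {x // ¬ q x} := by
  classical
  rw [← Nat.card_sum]
  exact Nat.card_congr (Equiv.sumCompl q).symm

theorem Nat.card_subtype_eq_card_and_add_card_and_not [Finite γ] (p q : γ → Prop) :
    Nat.card {x // p x} = Nat.card {x // p x ∧ q x} + Nat.card {x // p x ∧ ¬ q x} := by
  rw [Nat.card_eq_card_subtype_add_card_subtype_not (fun x : {x // p x} => q x),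
    Nat.card_congr (Equiv.subtypeSubtypeEquivSubtypeInter p q),
    Nat.card_congr (Equiv.subtypeSubtypeEquivSubtypeInter p (¬ q ·))]

theorem Nat.card_subtype_eq_mul_of_iff {P : γ × δ → Prop} {p : γ → Prop} {q : δ → Prop}
    (h : ∀ x, P x ↔ p x.1 ∧ q x.2) :
    Nat.card {x // P x} = Nat.card {a // p a} * Nat.card {b // q b} := by
  rw [← Nat.card_prod, ← Nat.card_congr Equiv.subtypeProdEquivProd]
  exact Nat.card_congr (Equiv.subtypeEquivRight h)

end Card

@[ext]
structure ChainTransferSystem (α : Type*) [LinearOrder α] where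
  rel : α → α → Prop
  refl : ∀ x, rel x x
  trans : ∀ x y z, rel x y → rel y z → rel x z
  le_of_rel : ∀ x y, rel x y → x ≤ y
  restrict : ∀ x y z, rel x y → z ≤ y → rel (min x z) z

namespace ChainTransferSystem

variable {α β : Type*} [LinearOrder α] [LinearOrder β]

instance [Finite α] : Finite (ChainTransferSystem α) :=
  Finite.of_injective rel fun _ _ => ChainTransferSystem.ext

instance : Inhabited (ChainTransferSystem α) :=
  ⟨{ rel := (· ≤ ·)
     refl := le_refl
     trans := fun _ _ _ => le_trans
     le_of_rel := fun _ _ h => h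
     restrict := fun x _ z _ _ => min_le_right x z }⟩

instance [Subsingleton α] : Subsingleton (ChainTransferSystem α) :=
  ⟨fun R S => by
    ext x y
    rw [Subsingleton.elim x y]
    exact iff_of_true (R.refl y) (S.refl y)⟩

theorem rel_of_rel_of_le (R : ChainTransferSystem α) {x y z : α} (h : R.rel x y)
    (hxz : x ≤ z) (hzy : z ≤ y) : R.rel x z := by
  simpa only [min_eq_left hxz] using R.restrict x y z h hzy

def comap (f : α ↪o β) (R : ChainTransferSystem β) : ChainTransferSystem α where
  rel a b := R.rel (f a) (f b)
  refl a := R.refl (f a)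
  trans _ _ _ := R.trans _ _ _
  le_of_rel a b h := f.le_iff_le.mp (R.le_of_rel _ _ h)
  restrict a b c h hcb := by
    simpa only [f.monotone.map_min] using R.restrict _ _ _ h (f.monotone hcb)

@[simp]
theorem comap_rel (f : α ↪o β) (R : ChainTransferSystem β) (a b : α) :
    (R.comap f).rel a b ↔ R.rel (f a) (f b) :=
  Iff.rfl

section Glue

variable {k : ℕ}

def lowerEmb (j : Fin (k + 1)) : Fin j ↪o Fin (k + 1) :=
  Fin.castLEOrderEmb (by omega)

def upperEmb (j : Fin (k + 1)) : Fin (k - j) ↪o Fin (k + 1) :=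
  OrderEmbedding.ofStrictMono (fun a => ⟨j + 1 + a, by omega⟩) fun _ _ h =>
    Fin.mk_lt_mk.mpr (by have := Fin.lt_def.mp h; omega)

@[simp]
theorem val_lowerEmb (j : Fin (k + 1)) (a : Fin j) : (lowerEmb j a : ℕ) = a :=
  rfl

@[simp]
theorem val_upperEmb (j : Fin (k + 1)) (a : Fin (k - j)) : (upperEmb j a : ℕ) = j + 1 + a :=
  rfl

variable (j : Fin (k + 1)) (L : ChainTransferSystem (Fin j))
  (U : ChainTransferSystem (Fin (k - j)))

/-- `L` lives on `{0, …, j - 1}`, `U` on `{j + 1, …, k}`, and `j` is the least element that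
transfers to the top `k`. -/
def GlueRel (x y : Fin (k + 1)) : Prop :=
  (∃ (hx : x.val < j) (hy : y.val < j), L.rel ⟨x, hx⟩ ⟨y, hy⟩)
    ∨ (x = j ∧ j ≤ y)
    ∨ (∃ (hx : j.val < x) (hy : j.val < y),
        U.rel ⟨x - j - 1, by omega⟩ ⟨y - j - 1, by omega⟩)

variable {j L U}

theorem glueRel_refl (x : Fin (k + 1)) : GlueRel j L U x x := by
  rcases lt_trichotomy x.val j with h | h | h
  · exact Or.inl ⟨h, h, L.refl _⟩
  · exact Or.inr (Or.inl ⟨Fin.ext h, (Fin.ext h).ge⟩)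
  · exact Or.inr (Or.inr ⟨h, h, U.refl _⟩)

theorem glueRel_trans {x y z : Fin (k + 1)} :
    GlueRel j L U x y → GlueRel j L U y z → GlueRel j L U x z := by
  rintro (⟨hx, hy, h⟩ | ⟨hx, hy⟩ | ⟨hx, hy, h⟩)
    (⟨hy', hz, h'⟩ | ⟨hy', hz⟩ | ⟨hy', hz, h'⟩)
  all_goals simp only [GlueRel, Fin.ext_iff, Fin.le_def] at *
  · exact Or.inl ⟨hx, hz, L.trans _ _ _ h h'⟩
  all_goals try omega
  exact Or.inr (Or.inr ⟨hx, hz, U.trans _ _ _ h h'⟩)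

theorem glueRel_le {x y : Fin (k + 1)} : GlueRel j L U x y → x ≤ y := by
  rintro (⟨hx, hy, h⟩ | ⟨rfl, hy⟩ | ⟨hx, hy, h⟩)
  · exact L.le_of_rel _ _ h
  · exact hy
  · have := Fin.le_def.mp (U.le_of_rel _ _ h)
    simp only at this
    exact Fin.le_def.mpr (by omega)

theorem glueRel_restrict {x y z : Fin (k + 1)} (h : GlueRel j L U x y) (hzy : z ≤ y) :
    GlueRel j L U (min x z) z := by
  rcases le_total x z with hxz | hzx
  · rw [min_eq_left hxz]
    rw [Fin.le_def] at hxz hzy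
    rcases h with ⟨hx, hy, h⟩ | ⟨rfl, -⟩ | ⟨hx, hy, h⟩
    · exact Or.inl
        ⟨hx, by omega, L.rel_of_rel_of_le h (Fin.le_def.mpr hxz) (Fin.le_def.mpr hzy)⟩
    · exact Or.inr (Or.inl ⟨rfl, Fin.le_def.mpr hxz⟩)
    · refine Or.inr (Or.inr ⟨hx, by omega, U.rel_of_rel_of_le h ?_ ?_⟩) <;>
        exact Fin.le_def.mpr (by simp only; omega)
  · rw [min_eq_right hzx]
    exact glueRel_refl z

variable (j L U) in
def glue : ChainTransferSystem (Fin (k + 1)) where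
  rel := GlueRel j L U
  refl := glueRel_refl
  trans _ _ _ := glueRel_trans
  le_of_rel _ _ := glueRel_le
  restrict _ _ _ := glueRel_restrict

theorem upperEmb_mk {x : Fin (k + 1)} (hx : j < x) :
    upperEmb j ⟨x - j - 1, by omega⟩ = x :=
  Fin.ext (by simp only [val_upperEmb]; omega)

theorem comap_lowerEmb_glue : (glue j L U).comap (lowerEmb j) = L := by
  ext a b
  constructor
  · rintro (⟨_, _, h⟩ | ⟨h, -⟩ | ⟨h, -⟩)
    · exact h
    all_goals simp only [Fin.ext_iff, val_lowerEmb] at h; omega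
  · exact fun h => Or.inl ⟨a.isLt, b.isLt, h⟩

theorem comap_upperEmb_glue : (glue j L U).comap (upperEmb j) = U := by
  have hsub (c : Fin (k - j)) : (⟨upperEmb j c - j - 1, by simp; omega⟩ : Fin (k - j)) = c :=
    Fin.ext (by simp only [val_upperEmb]; omega)
  ext a b
  constructor
  · rintro (⟨h, -⟩ | ⟨h, -⟩ | ⟨_, _, h⟩)
    · simp only [val_upperEmb] at h; omega
    · simp only [Fin.ext_iff, val_upperEmb] at h; omega
    · rwa [hsub, hsub] at h
  · intro h
    refine Or.inr (Or.inr ⟨?_, ?_, by rwa [hsub, hsub]⟩) <;> simp only [val_upperEmb] <;> omega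

theorem glue_rel_last : (glue j L U).rel j (Fin.last k) :=
  Or.inr (Or.inl ⟨rfl, Fin.le_last j⟩)

theorem not_glue_rel_last {x : Fin (k + 1)} (hx : x < j) :
    ¬ (glue j L U).rel x (Fin.last k) := by
  rw [Fin.lt_def] at hx
  rintro (⟨-, h, -⟩ | ⟨rfl, -⟩ | ⟨h, -⟩)
  · exact absurd h (by simp; omega)
  · omega
  · omega

end Glue

section TopIndex

variable {k : ℕ} (A : ChainTransferSystem (Fin (k + 1)))

noncomputable def topIndex : Fin (k + 1) :=
  wellFounded_lt.min {x | A.rel x (Fin.last k)} ⟨Fin.last k, A.refl _⟩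

theorem rel_topIndex_last : A.rel A.topIndex (Fin.last k) :=
  wellFounded_lt.min_mem {x | A.rel x (Fin.last k)} _

theorem topIndex_le {x : Fin (k + 1)} (h : A.rel x (Fin.last k)) : A.topIndex ≤ x :=
  not_lt.mp (wellFounded_lt.not_lt_min {x | A.rel x (Fin.last k)} h)

theorem topIndex_glue (j : Fin (k + 1)) (L : ChainTransferSystem (Fin j))
    (U : ChainTransferSystem (Fin (k - j))) : (glue j L U).topIndex = j :=
  le_antisymm (topIndex_le _ glue_rel_last)
    (not_lt.mp fun h => not_glue_rel_last h (rel_topIndex_last _))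

theorem glue_topIndex :
    glue A.topIndex (A.comap (lowerEmb _)) (A.comap (upperEmb _)) = A := by
  set j := A.topIndex
  have rel_of_ge : ∀ y, j ≤ y → A.rel j y := fun y hy =>
    A.rel_of_rel_of_le A.rel_topIndex_last hy (Fin.le_last y)
  have not_rel : ∀ x y, x < j → j ≤ y → ¬ A.rel x y := fun x y hx hy h =>
    (A.topIndex_le (A.trans _ _ _ (A.rel_of_rel_of_le h hx.le hy) A.rel_topIndex_last)).not_gt
      hx
  ext x y
  constructor
  · rintro (⟨_, _, h⟩ | ⟨rfl, hy⟩ | ⟨hx, hy, h⟩)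
    · exact h
    · exact rel_of_ge y hy
    · rwa [comap_rel, upperEmb_mk hx, upperEmb_mk hy] at h
  · intro h
    have hxy := A.le_of_rel x y h
    rcases lt_trichotomy x j with hx | rfl | hx
    · by_cases hy : y < j
      · exact Or.inl ⟨hx, hy, h⟩
      · exact absurd h (not_rel x y hx (not_lt.mp hy))
    · exact Or.inr (Or.inl ⟨rfl, hxy⟩)
    · refine Or.inr (Or.inr ⟨hx, hx.trans_le hxy, ?_⟩)
      rwa [comap_rel, upperEmb_mk hx, upperEmb_mk (hx.trans_le hxy)]

end TopIndex

theorem glue_injective {k : ℕ} : Function.Injective fun t :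
    Σ j : Fin (k + 1), ChainTransferSystem (Fin j) × ChainTransferSystem (Fin (k - j)) =>
      glue t.1 t.2.1 t.2.2 := by
  rintro ⟨j, L, U⟩ ⟨j', L', U'⟩ h
  obtain rfl : j = j' := by simpa only [topIndex_glue] using congrArg topIndex h
  have hL := congrArg (comap (lowerEmb j)) h
  have hU := congrArg (comap (upperEmb j)) h
  simp only [comap_lowerEmb_glue, comap_upperEmb_glue] at hL hU
  rw [hL, hU]

noncomputable def glueEquiv (k : ℕ) :
    (Σ j : Fin (k + 1), ChainTransferSystem (Fin j) × ChainTransferSystem (Fin (k - j))) ≃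
      ChainTransferSystem (Fin (k + 1)) :=
  Equiv.ofBijective _ ⟨glue_injective, fun A => ⟨⟨_, _, _⟩, A.glue_topIndex⟩⟩

theorem card_eq_catalan (k : ℕ) : Nat.card (ChainTransferSystem (Fin k)) = catalan k := by
  induction k using Nat.strong_induction_on with
  | _ k ih =>
    cases k with
    | zero =>
      rw [catalan_zero, Nat.card_eq_one_iff_unique]
      exact ⟨inferInstance, inferInstance⟩
    | succ k =>
      rw [← Nat.card_congr (glueEquiv k), Nat.card_sigma, catalan_succ]
      refine Finset.sum_congr rfl fun j _ => ?_
      rw [Nat.card_prod, ih j (by omega), ih (k - j) (by omega)]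

section Bounded

variable [BoundedOrder α] [BoundedOrder β] (A : ChainTransferSystem α)

def IsFull : Prop := A.rel ⊥ ⊤

def TopIsolated : Prop := ∀ x, A.rel x ⊤ → x = ⊤

def IsBotFan : Prop := ∀ y ≠ ⊤, A.rel ⊥ y

variable {A}

theorem IsFull.isBotFan (h : A.IsFull) : A.IsBotFan := fun _ _ =>
  A.rel_of_rel_of_le h bot_le le_top

theorem IsFull.not_topIsolated [Nontrivial α] (h : A.IsFull) : ¬ A.TopIsolated := fun hA =>
  bot_ne_top (hA ⊥ h)

theorem IsBotFan.isFull (hA : A.IsBotFan) (h : ¬ A.TopIsolated) : A.IsFull := by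
  simp only [TopIsolated, not_forall] at h
  obtain ⟨x, hx, hne⟩ := h
  exact A.trans _ _ _ (hA x hne) hx

end Bounded

section Count

variable {k : ℕ} {j : Fin (k + 1)} {L : ChainTransferSystem (Fin j)}
  {U : ChainTransferSystem (Fin (k - j))}

theorem glue_isFull_iff : (glue j L U).IsFull ↔ j = 0 := by
  refine ⟨fun h => ?_, by rintro rfl; exact glue_rel_last⟩
  rw [← topIndex_glue j L U]
  exact le_bot_iff.mp (topIndex_le _ h)

theorem glue_topIsolated_iff : (glue j L U).TopIsolated ↔ j = Fin.last k := by
  refine ⟨fun h => h j glue_rel_last, ?_⟩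
  rintro rfl x hx
  by_contra hne
  exact not_glue_rel_last (Fin.lt_last_iff_ne_last.mpr hne) hx

theorem card_isFull (k : ℕ) :
    Nat.card {A : ChainTransferSystem (Fin (k + 1)) // A.IsFull} = catalan k := by
  have e := ((glueEquiv k).subtypeEquiv fun _ => glue_isFull_iff.symm).symm.trans
    (Equiv.sigmaSubtype 0)
  rw [Nat.card_congr e, Nat.card_prod, card_eq_catalan, card_eq_catalan]
  simp

theorem glue_last_comap_lowerEmb {A : ChainTransferSystem (Fin (k + 1))} (hA : A.TopIsolated) :
    glue (Fin.last k) (A.comap (lowerEmb _)) default = A := by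
  have htop : A.topIndex = Fin.last k :=
    le_antisymm (Fin.le_last _) (hA _ A.rel_topIndex_last).ge
  have hglue := A.glue_topIndex
  rw [htop] at hglue
  have : Subsingleton (Fin (k - Fin.last k)) := by
    rw [Fin.val_last, Nat.sub_self]
    infer_instance
  convert hglue using 2
  exact Subsingleton.elim _ _

noncomputable def topIsolatedEquiv (k : ℕ) :
    {A : ChainTransferSystem (Fin (k + 1)) // A.TopIsolated} ≃ ChainTransferSystem (Fin k) :=
  Equiv.ofBijective (fun A => A.1.comap (lowerEmb (Fin.last k)))
    ⟨fun A B h => Subtype.ext <| by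
      rw [← glue_last_comap_lowerEmb A.2, ← glue_last_comap_lowerEmb B.2]
      exact congrArg (glue _ · default) h,
    fun C =>
      ⟨⟨glue (Fin.last k) C default, glue_topIsolated_iff.mpr rfl⟩, comap_lowerEmb_glue⟩⟩

theorem card_topIsolated (k : ℕ) :
    Nat.card {A : ChainTransferSystem (Fin (k + 1)) // A.TopIsolated} = catalan k := by
  rw [Nat.card_congr (topIsolatedEquiv k), card_eq_catalan]

theorem isFull_topIsolatedEquiv_iff
    (A : {A : ChainTransferSystem (Fin (k + 2)) // A.TopIsolated}) :
    (topIsolatedEquiv (k + 1) A).IsFull ↔ A.1.IsBotFan := by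
  set y₀ := lowerEmb (Fin.last (k + 1)) (⊤ : Fin (k + 1))
  have hy₀ : (y₀ : ℕ) = k := rfl
  change A.1.rel ⊥ y₀ ↔ _
  refine ⟨fun h y hy => A.1.rel_of_rel_of_le h bot_le ?_, fun h => h y₀ ?_⟩
  · exact Fin.le_def.mpr (by have := Fin.val_lt_last hy; omega)
  · exact Fin.ne_of_val_ne (by rw [hy₀, Fin.top_eq_last, Fin.val_last]; omega)

theorem card_topIsolated_isBotFan (k : ℕ) :
    Nat.card {A : ChainTransferSystem (Fin (k + 2)) // A.TopIsolated ∧ A.IsBotFan} =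
      catalan k := by
  rw [← card_isFull k, ← Nat.card_congr (Equiv.subtypeSubtypeEquivSubtypeInter _ _)]
  exact Nat.card_congr ((topIsolatedEquiv (k + 1)).subtypeEquiv fun A =>
    (isFull_topIsolatedEquiv_iff A).symm)

theorem card_not_topIsolated_not_isFull {k : ℕ} (hk : 1 ≤ k) :
    Nat.card {A : ChainTransferSystem (Fin (k + 1)) // ¬ A.TopIsolated ∧ ¬ A.IsFull} +
      2 * catalan k = catalan (k + 1) := by
  have : Nontrivial (Fin (k + 1)) := Fin.nontrivial_iff_two_le.mpr (by omega)
  have hfull : Nat.card {A : ChainTransferSystem (Fin (k + 1)) // ¬ A.TopIsolated ∧ A.IsFull} =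
      catalan k := by
    rw [← card_isFull k]
    exact Nat.card_congr (Equiv.subtypeEquivRight fun A =>
      and_iff_right_of_imp fun h : A.IsFull => h.not_topIsolated)
  have htotal := card_eq_catalan (k + 1)
  rw [Nat.card_eq_card_subtype_add_card_subtype_not TopIsolated, card_topIsolated,
    Nat.card_subtype_eq_card_and_add_card_and_not _ IsFull, hfull] at htotal
  omega

end Count

section Compatible

variable [BoundedOrder α] [BoundedOrder β] {A : ChainTransferSystem α}
  {B : ChainTransferSystem β}

variable (A B) in
def Compatible : Prop :=
  (A.IsFull ↔ B.IsFull) ∧ (¬ A.TopIsolated → B.IsBotFan) ∧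
    (¬ B.TopIsolated → A.IsBotFan)

theorem Compatible.symm (h : Compatible A B) : Compatible B A :=
  ⟨h.1.symm, h.2.2, h.2.1⟩

theorem compatible_of_topIsolated [Nontrivial α] [Nontrivial β] (hA : A.TopIsolated)
    (hB : B.TopIsolated) : Compatible A B :=
  ⟨iff_of_false (fun h => h.not_topIsolated hA) (fun h => h.not_topIsolated hB),
    fun h => absurd hA h, fun h => absurd hB h⟩

theorem compatible_iff_of_not_topIsolated_of_topIsolated [Nontrivial β] (hA : ¬ A.TopIsolated)
    (hB : B.TopIsolated) : Compatible A B ↔ ¬ A.IsFull ∧ B.IsBotFan :=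
  ⟨fun h => ⟨fun hF => (h.1.mp hF).not_topIsolated hB, h.2.1 hA⟩, fun ⟨hF, hfan⟩ =>
    ⟨iff_of_false hF (fun h => h.not_topIsolated hB), fun _ => hfan, fun h => absurd hB h⟩⟩

theorem compatible_iff_of_topIsolated_of_not_topIsolated [Nontrivial α] (hA : A.TopIsolated)
    (hB : ¬ B.TopIsolated) : Compatible A B ↔ A.IsBotFan ∧ ¬ B.IsFull :=
  ⟨fun h => (compatible_iff_of_not_topIsolated_of_topIsolated hB hA).mp h.symm |>.symm,
    fun h => ((compatible_iff_of_not_topIsolated_of_topIsolated hB hA).mpr h.symm).symm⟩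

theorem compatible_iff_of_not_topIsolated (hA : ¬ A.TopIsolated) (hB : ¬ B.TopIsolated) :
    Compatible A B ↔ A.IsFull ∧ B.IsFull := by
  refine ⟨fun h => ?_, fun ⟨hFA, hFB⟩ =>
    ⟨iff_of_true hFA hFB, fun _ => hFB.isBotFan, fun _ => hFA.isBotFan⟩⟩
  have hFB := (h.2.1 hA).isFull hB
  exact ⟨h.1.mpr hFB, hFB⟩

theorem card_compatible_eq [Finite α] [Finite β] [Nontrivial α] [Nontrivial β] :
    Nat.card {p : ChainTransferSystem α × ChainTransferSystem β // Compatible p.1 p.2} =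
      Nat.card {A : ChainTransferSystem α // A.TopIsolated} *
          Nat.card {B : ChainTransferSystem β // B.TopIsolated}
        + Nat.card {A : ChainTransferSystem α // A.TopIsolated ∧ A.IsBotFan} *
          Nat.card {B : ChainTransferSystem β // ¬ B.TopIsolated ∧ ¬ B.IsFull}
        + (Nat.card {A : ChainTransferSystem α // ¬ A.TopIsolated ∧ ¬ A.IsFull} *
            Nat.card {B : ChainTransferSystem β // B.TopIsolated ∧ B.IsBotFan}
          + Nat.card {A : ChainTransferSystem α // A.IsFull} *
            Nat.card {B : ChainTransferSystem β // B.IsFull}) := by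
  rw [Nat.card_subtype_eq_card_and_add_card_and_not _ fun p => p.1.TopIsolated,
    Nat.card_subtype_eq_card_and_add_card_and_not _ fun p => p.2.TopIsolated,
    Nat.card_subtype_eq_card_and_add_card_and_not
      (fun p : ChainTransferSystem α × ChainTransferSystem β =>
        Compatible p.1 p.2 ∧ ¬ p.1.TopIsolated) fun p => p.2.TopIsolated]
  congr 1
  congr 1
  · exact Nat.card_subtype_eq_mul_of_iff fun _ =>
      ⟨fun ⟨⟨_, hA⟩, hB⟩ => ⟨hA, hB⟩,
        fun ⟨hA, hB⟩ => ⟨⟨compatible_of_topIsolated hA hB, hA⟩, hB⟩⟩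
  · exact Nat.card_subtype_eq_mul_of_iff fun _ =>
      and_and_iff_of_imp_iff compatible_iff_of_topIsolated_of_not_topIsolated
  congr 1
  · exact Nat.card_subtype_eq_mul_of_iff fun _ =>
      and_and_iff_of_imp_iff compatible_iff_of_not_topIsolated_of_topIsolated
  · refine Nat.card_subtype_eq_mul_of_iff fun _ =>
      ⟨fun ⟨⟨h, hA⟩, hB⟩ => (compatible_iff_of_not_topIsolated hA hB).mp h,
        fun ⟨hFA, hFB⟩ => ?_⟩
    have hA := hFA.not_topIsolated
    have hB := hFB.not_topIsolated
    exact ⟨⟨(compatible_iff_of_not_topIsolated hA hB).mpr ⟨hFA, hFB⟩, hA⟩, hB⟩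

end Compatible

theorem card_compatible {m n : ℕ} (hm : 1 ≤ m) (hn : 1 ≤ n) :
    Nat.card {p : ChainTransferSystem (Fin (m + 1)) × ChainTransferSystem (Fin (n + 1)) //
      Compatible p.1 p.2} =
      2 * catalan n * catalan m
        + catalan (n - 1) * (catalan (m + 1) - 2 * catalan m)
        + catalan (m - 1) * (catalan (n + 1) - 2 * catalan n) := by
  obtain ⟨m, rfl⟩ : ∃ m', m = m' + 1 := ⟨m - 1, by omega⟩
  obtain ⟨n, rfl⟩ : ∃ n', n = n' + 1 := ⟨n - 1, by omega⟩
  have : Nontrivial (Fin (m + 2)) := Fin.nontrivial_iff_two_le.mpr (by omega)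
  have : Nontrivial (Fin (n + 2)) := Fin.nontrivial_iff_two_le.mpr (by omega)
  rw [card_compatible_eq, card_topIsolated, card_topIsolated, card_topIsolated_isBotFan,
    card_topIsolated_isBotFan, card_isFull, card_isFull, Nat.add_sub_cancel, Nat.add_sub_cancel,
    ← card_not_topIsolated_not_isFull (k := m + 1) (by omega),
    ← card_not_topIsolated_not_isFull (k := n + 1) (by omega), Nat.add_sub_cancel,
    Nat.add_sub_cancel]
  ring

end ChainTransferSystem

attribute [ext] TransferSystemPoset

namespace TransferSystemPoset

variable {α F : Type*} [LinearOrder α] [PartialOrder F]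

def comap (R : TransferSystemPoset F) (i : α ↪o F) : ChainTransferSystem α where
  rel a b := R.rel (i a) (i b)
  refl a := R.refl (i a)
  trans _ _ _ := R.trans _ _ _
  le_of_rel _ _ h := i.le_iff_le.mp (R.le_of_rel _ _ h)
  restrict a _ c h hcb :=
    R.restrict _ _ _ _ h (i.monotone hcb) (i.monotone (min_le_left a c))
      (i.monotone (min_le_right a c)) fun _ hva hvc hv => le_antisymm (le_apply_min i hva hvc) hv

@[simp]
theorem comap_rel (R : TransferSystemPoset F) (i : α ↪o F) (a b : α) :
    (R.comap i).rel a b ↔ R.rel (i a) (i b) :=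
  Iff.rfl

end TransferSystemPoset

section Fusion

open ChainTransferSystem

variable {α β F : Type*} [LinearOrder α] [LinearOrder β] [PartialOrder F]

def FusionRel (iP : α ↪o F) (iQ : β ↪o F) (A : ChainTransferSystem α)
    (B : ChainTransferSystem β) (f g : F) : Prop :=
  (∃ a b, iP a = f ∧ iP b = g ∧ A.rel a b) ∨ (∃ c d, iQ c = f ∧ iQ d = g ∧ B.rel c d)

theorem fusionRel_comm {iP : α ↪o F} {iQ : β ↪o F} {A : ChainTransferSystem α}
    {B : ChainTransferSystem β} {f g : F} :
    FusionRel iQ iP B A f g ↔ FusionRel iP iQ A B f g :=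
  or_comm

variable [BoundedOrder α] [BoundedOrder β] [BoundedOrder F]

/-- `F` is the fusion `α * β`, with `iP` and `iQ` the inclusions of the two chains. -/
structure IsFusion (iP : α ↪o F) (iQ : β ↪o F) : Prop where
  map_bot_left : iP ⊥ = ⊥
  map_top_left : iP ⊤ = ⊤
  map_bot_right : iQ ⊥ = ⊥
  map_top_right : iQ ⊤ = ⊤
  surj : ∀ f, (∃ a, iP a = f) ∨ (∃ b, iQ b = f)
  inter : ∀ a b, iP a = iQ b → (a = ⊥ ∧ b = ⊥) ∨ (a = ⊤ ∧ b = ⊤)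
  le_iff : ∀ f g : F, f ≤ g ↔
    (∃ a b, iP a = f ∧ iP b = g ∧ a ≤ b) ∨ (∃ a b, iQ a = f ∧ iQ b = g ∧ a ≤ b)

namespace IsFusion

variable {iP : α ↪o F} {iQ : β ↪o F} (hF : IsFusion iP iQ)
include hF

theorem symm : IsFusion iQ iP :=
  ⟨hF.map_bot_right, hF.map_top_right, hF.map_bot_left, hF.map_top_left,
    fun f => (hF.surj f).symm, fun b a h => (hF.inter a b h.symm).imp And.symm And.symm,
    fun f g => (hF.le_iff f g).trans or_comm⟩

theorem exists_left_eq_of_le {v : F} {a : α} (hva : v ≤ iP a) (ha : a ≠ ⊤) :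
    ∃ p ≤ a, iP p = v := by
  rcases (hF.le_iff v (iP a)).mp hva with ⟨p, q, hp, hq, hpq⟩ | ⟨p, q, -, hq, -⟩
  · exact ⟨p, iP.injective hq ▸ hpq, hp⟩
  · rcases hF.inter a q hq.symm with ⟨rfl, -⟩ | ⟨rfl, -⟩
    · rw [hF.map_bot_left, le_bot_iff] at hva
      exact ⟨⊥, le_rfl, hF.map_bot_left.trans hva.symm⟩
    · exact absurd rfl ha

theorem eq_bot_of_le_of_le {v : F} {a : α} {b : β} (ha : a ≠ ⊤) (hb : b ≠ ⊤)
    (hva : v ≤ iP a) (hvb : v ≤ iQ b) : v = ⊥ := by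
  obtain ⟨p, hpa, rfl⟩ := hF.exists_left_eq_of_le hva ha
  obtain ⟨q, -, hq⟩ := hF.symm.exists_left_eq_of_le hvb hb
  rcases hF.inter p q hq.symm with ⟨rfl, -⟩ | ⟨rfl, -⟩
  · exact hF.map_bot_left
  · exact absurd (top_le_iff.mp hpa) ha

theorem isBotFan_comap_of_not_topIsolated (R : TransferSystemPoset F)
    (h : ¬ (R.comap iP).TopIsolated) : (R.comap iQ).IsBotFan := by
  simp only [TopIsolated, not_forall] at h
  obtain ⟨x, hx, hne⟩ := h
  intro y hy
  rw [TransferSystemPoset.comap_rel, hF.map_bot_right]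
  rw [TransferSystemPoset.comap_rel, hF.map_top_left] at hx
  exact R.restrict _ _ _ _ hx le_top bot_le bot_le fun v hvx hvy _ =>
    hF.eq_bot_of_le_of_le hne hy hvx hvy

theorem compatible_comap (R : TransferSystemPoset F) : Compatible (R.comap iP) (R.comap iQ) := by
  refine ⟨?_, hF.isBotFan_comap_of_not_topIsolated R,
    hF.symm.isBotFan_comap_of_not_topIsolated R⟩
  simp only [IsFull, TransferSystemPoset.comap_rel, hF.map_bot_left, hF.map_top_left,
    hF.map_bot_right, hF.map_top_right]

variable {A : ChainTransferSystem α} {B : ChainTransferSystem β}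

theorem fusionRel_of_rel_of_rel {a b : α} {c d : β} (hbc : iP b = iQ c) (hab : A.rel a b)
    (hcd : B.rel c d) : FusionRel iP iQ A B (iP a) (iQ d) := by
  rcases hF.inter b c hbc with ⟨rfl, rfl⟩ | ⟨rfl, rfl⟩
  · obtain rfl := le_bot_iff.mp (A.le_of_rel a ⊥ hab)
    exact Or.inr ⟨⊥, d, hF.map_bot_right.trans hF.map_bot_left.symm, rfl, hcd⟩
  · obtain rfl := top_le_iff.mp (B.le_of_rel ⊤ d hcd)
    exact Or.inl ⟨a, ⊤, rfl, hF.map_top_left.trans hF.map_top_right.symm, hab⟩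

theorem fusionRel_trans {f g h : F} :
    FusionRel iP iQ A B f g → FusionRel iP iQ A B g h → FusionRel iP iQ A B f h := by
  rintro (⟨a, b, rfl, rfl, hab⟩ | ⟨c, d, rfl, rfl, hcd⟩)
    (⟨a', b', ha', rfl, hab'⟩ | ⟨c', d', hc', rfl, hcd'⟩)
  · obtain rfl := iP.injective ha'
    exact Or.inl ⟨a, b', rfl, rfl, A.trans _ _ _ hab hab'⟩
  · exact hF.fusionRel_of_rel_of_rel hc'.symm hab hcd'
  · exact fusionRel_comm.mp (hF.symm.fusionRel_of_rel_of_rel ha'.symm hcd hab')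
  · obtain rfl := iQ.injective hc'
    exact Or.inr ⟨c, d', rfl, rfl, B.trans _ _ _ hcd hcd'⟩

/-- If `z` lies on the first chain, the maximal common lower bound `w` is `iP (min a c)`;
otherwise `b = ⊤` and `w` is `⊥`, or `z` itself when `a = ⊤`. -/
theorem fusionRel_restrict (hfan : ¬ A.TopIsolated → B.IsBotFan) {a b : α} (hab : A.rel a b)
    {z w : F} (hz : z ≤ iP b) (hw : w ≤ iP a) (hwz : w ≤ z)
    (hmax : ∀ v, v ≤ iP a → v ≤ z → w ≤ v → v = w) : FusionRel iP iQ A B w z := by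
  by_cases hzP : ∃ c, iP c = z
  · obtain ⟨c, rfl⟩ := hzP
    have hmin := hmax _ (iP.monotone (min_le_left a c)) (iP.monotone (min_le_right a c))
      (le_apply_min iP hw hwz)
    exact Or.inl ⟨min a c, c, hmin, rfl, A.restrict a b c hab (iP.le_iff_le.mp hz)⟩
  obtain ⟨d, rfl⟩ := (hF.surj z).resolve_left hzP
  have hb : b = ⊤ := by
    by_contra hb
    obtain ⟨p, -, hp⟩ := hF.exists_left_eq_of_le hz hb
    exact hzP ⟨p, hp⟩
  have hd : d ≠ ⊤ := fun hd => hzP ⟨⊤, by rw [hd, hF.map_top_left, hF.map_top_right]⟩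
  subst hb
  by_cases ha : a = ⊤
  · subst ha
    exact Or.inr ⟨d, d, hmax _ (hF.map_top_left ▸ le_top) le_rfl hwz, rfl, B.refl d⟩
  · refine Or.inr ⟨⊥, d, ?_, rfl, hfan (fun hA => ha (hA a hab)) d hd⟩
    rw [hF.map_bot_right, hF.eq_bot_of_le_of_le ha hd hw hwz]

def transferSystem (A : ChainTransferSystem α) (B : ChainTransferSystem β)
    (h : Compatible A B) : TransferSystemPoset F where
  rel := FusionRel iP iQ A B
  refl f := (hF.surj f).elim (fun ⟨a, ha⟩ => Or.inl ⟨a, a, ha, ha, A.refl a⟩)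
    fun ⟨c, hc⟩ => Or.inr ⟨c, c, hc, hc, B.refl c⟩
  trans _ _ _ := hF.fusionRel_trans
  le_of_rel _ _ := by
    rintro (⟨a, b, rfl, rfl, h⟩ | ⟨c, d, rfl, rfl, h⟩)
    · exact iP.monotone (A.le_of_rel a b h)
    · exact iQ.monotone (B.le_of_rel c d h)
  restrict _ _ _ _ := by
    rintro (⟨a, b, rfl, rfl, hab⟩ | ⟨c, d, rfl, rfl, hcd⟩) hz hw hwz hmax
    · exact hF.fusionRel_restrict h.2.1 hab hz hw hwz hmax
    · exact fusionRel_comm.mp (hF.symm.fusionRel_restrict h.2.2 hcd hz hw hwz hmax)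

theorem fusionRel_left_iff (hfull : B.IsFull → A.IsFull) {a b : α} :
    FusionRel iP iQ A B (iP a) (iP b) ↔ A.rel a b := by
  refine ⟨?_, fun h => Or.inl ⟨a, b, rfl, rfl, h⟩⟩
  rintro (⟨a', b', ha, hb, h⟩ | ⟨c, d, hc, hd, hcd⟩)
  · rwa [← iP.injective ha, ← iP.injective hb]
  rcases hF.inter a c hc.symm with ⟨rfl, rfl⟩ | ⟨rfl, rfl⟩ <;>
    rcases hF.inter b d hd.symm with ⟨rfl, rfl⟩ | ⟨rfl, rfl⟩
  · exact A.refl ⊥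
  · exact hfull hcd
  · have : (⊤ : α) ≤ ⊥ := iP.le_iff_le.mp (hc ▸ hd ▸ iQ.monotone (B.le_of_rel _ _ hcd))
    rw [le_bot_iff.mp this]
    exact A.refl ⊥
  · exact A.refl ⊤

theorem comap_left_transferSystem (h : Compatible A B) :
    (hF.transferSystem A B h).comap iP = A := by
  ext a b
  exact hF.fusionRel_left_iff h.1.mpr

theorem comap_right_transferSystem (h : Compatible A B) :
    (hF.transferSystem A B h).comap iQ = B := by
  ext c d
  exact fusionRel_comm.symm.trans (hF.symm.fusionRel_left_iff h.1.mp)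

theorem transferSystem_comap (R : TransferSystemPoset F) :
    hF.transferSystem (R.comap iP) (R.comap iQ) (hF.compatible_comap R) = R := by
  ext f g
  refine ⟨?_, fun h => ?_⟩
  · rintro (⟨a, b, rfl, rfl, h⟩ | ⟨c, d, rfl, rfl, h⟩) <;> exact h
  · rcases (hF.le_iff f g).mp (R.le_of_rel f g h) with
      ⟨a, b, rfl, rfl, -⟩ | ⟨c, d, rfl, rfl, -⟩
    · exact Or.inl ⟨a, b, rfl, rfl, h⟩
    · exact Or.inr ⟨c, d, rfl, rfl, h⟩

def transferSystemEquiv :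
    TransferSystemPoset F ≃ {p : ChainTransferSystem α × ChainTransferSystem β //
      Compatible p.1 p.2} where
  toFun R := ⟨(R.comap iP, R.comap iQ), hF.compatible_comap R⟩
  invFun p := hF.transferSystem p.1.1 p.1.2 p.2
  left_inv := hF.transferSystem_comap
  right_inv p :=
    Subtype.ext (Prod.ext (hF.comap_left_transferSystem p.2) (hF.comap_right_transferSystem p.2))

end IsFusion

end Fusion

/-- for m, n ≥ 1, the number of transfer systems on the fusion
[m] * [n] of the total orders [m] = Fin (m+1) and [n] = Fin (n+1) is
2·Cat(n)·Cat(m) + Cat(n−1)·(Cat(m+1) − 2·Cat(m)) + Cat(m−1)·(Cat(n+1) − 2·Cat(n));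
in particular for m = n it equals 2·(Cat(n)² + Cat(n−1)·(Cat(n+1) − 2·Cat(n))).
Here `F` together with the embeddings `iP`, `iQ` is the fusion: the
embeddings preserve ⊥ and ⊤, are jointly surjective, their images meet only
in {⊥, ⊤}, and the order on `F` is the union of the two chain orders. -/
theorem stmt17 (m n : ℕ) (hm : 1 ≤ m) (hn : 1 ≤ n)
    (F : Type*) [PartialOrder F] [BoundedOrder F]
    (iP : Fin (m + 1) ↪o F) (iQ : Fin (n + 1) ↪o F)
    (hPbot : iP ⊥ = ⊥) (hPtop : iP ⊤ = ⊤)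
    (hQbot : iQ ⊥ = ⊥) (hQtop : iQ ⊤ = ⊤)
    (hsurj : ∀ f : F, (∃ a, iP a = f) ∨ (∃ b, iQ b = f))
    (hint : ∀ (a : Fin (m + 1)) (b : Fin (n + 1)),
        iP a = iQ b → (a = ⊥ ∧ b = ⊥) ∨ (a = ⊤ ∧ b = ⊤))
    (horder : ∀ f g : F, f ≤ g ↔
        ((∃ a b, iP a = f ∧ iP b = g ∧ a ≤ b) ∨
          (∃ a b, iQ a = f ∧ iQ b = g ∧ a ≤ b))) :
    Nat.card (TransferSystemPoset F) =
      2 * catalan n * catalan m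
        + catalan (n - 1) * (catalan (m + 1) - 2 * catalan m)
        + catalan (m - 1) * (catalan (n + 1) - 2 * catalan n) ∧
    (m = n → Nat.card (TransferSystemPoset F) =
      2 * (catalan n ^ 2 + catalan (n - 1) * (catalan (n + 1) - 2 * catalan n))) := by
  have hF : IsFusion iP iQ := ⟨hPbot, hPtop, hQbot, hQtop, hsurj, hint, horder⟩
  have hcard := (Nat.card_congr hF.transferSystemEquiv).trans
    (ChainTransferSystem.card_compatible hm hn)
  refine ⟨hcard, ?_⟩
  rintro rfl
  rw [hcard]
  ring
end

section
/- For every integer n ≥ 1, the number of transfer systems on the n-fold iterated fusion [2]^{*n} of [2] = {0 < 1 < 2} with itself is |Tr([2]^{*n})| = 2^{n+1} + n (where [2]^{*1} = [2]). -/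
/-- `F` is `[2]^{*n}`, with `mid` listing its middle elements. -/
structure IsFusionPow {n : ℕ} {F : Type*} [PartialOrder F] [BoundedOrder F]
    (mid : Fin n → F) : Prop where
  bot_lt : ∀ i, ⊥ < mid i
  lt_top : ∀ i, mid i < ⊤
  eq_bot_or_eq_top_or_exists : ∀ x, x = ⊥ ∨ x = ⊤ ∨ ∃ i, x = mid i
  eq_of_le : ∀ {i j}, mid i ≤ mid j → i = j

namespace IsFusionPow

variable {n : ℕ} {F : Type*} [PartialOrder F] [BoundedOrder F] {mid : Fin n → F}

theorem injective (hF : IsFusionPow mid) : Function.Injective mid :=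
  fun _ _ h => hF.eq_of_le h.le

theorem eq_bot_or_eq_of_le (hF : IsFusionPow mid) {x : F} {i : Fin n} (hx : x ≤ mid i) :
    x = ⊥ ∨ x = mid i := by
  rcases hF.eq_bot_or_eq_top_or_exists x with rfl | rfl | ⟨j, rfl⟩
  · exact Or.inl rfl
  · exact absurd hx (hF.lt_top i).not_ge
  · exact Or.inr (congrArg mid (hF.eq_of_le hx))

end IsFusionPow

/-- Which of the pairs `⊥ → ⊤`, `⊥ → mid i`, `mid i → ⊤` a relation on `[2]^{*n}`
contains. -/
@[ext]
structure TransferProfile (n : ℕ) where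
  botTop : Prop
  botMid : Set (Fin n)
  midTop : Set (Fin n)

namespace TransferProfile

variable {n : ℕ}

structure Admissible (p : TransferProfile n) : Prop where
  botMid_of_botTop : p.botTop → ∀ i, i ∈ p.botMid
  botMid_of_midTop : ∀ i ∈ p.midTop, ∀ j ≠ i, j ∈ p.botMid
  botTop_of_botMid_of_midTop : ∀ i ∈ p.botMid, i ∈ p.midTop → p.botTop

variable {F : Type*} [PartialOrder F] [BoundedOrder F] {mid : Fin n → F}
  {p : TransferProfile n}

def Rel (p : TransferProfile n) (mid : Fin n → F) (x y : F) : Prop :=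
  x = y ∨ (x = ⊥ ∧ y = ⊤ ∧ p.botTop) ∨ (∃ i ∈ p.botMid, x = ⊥ ∧ y = mid i) ∨
    ∃ i ∈ p.midTop, x = mid i ∧ y = ⊤

theorem le_of_rel {x y : F} (h : p.Rel mid x y) : x ≤ y := by
  rcases h with rfl | ⟨rfl, rfl, -⟩ | ⟨i, -, rfl, rfl⟩ | ⟨i, -, rfl, rfl⟩
  exacts [le_rfl, bot_le, bot_le, le_top]

theorem rel_trans (hF : IsFusionPow mid) (hp : p.Admissible) {x y z : F}
    (hxy : p.Rel mid x y) (hyz : p.Rel mid y z) : p.Rel mid x z := by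
  rcases hxy with rfl | ⟨rfl, rfl, hb⟩ | ⟨i, hi, rfl, rfl⟩ | ⟨i, hi, rfl, rfl⟩
  · exact hyz
  · obtain rfl := top_le_iff.mp (le_of_rel hyz)
    exact Or.inr (Or.inl ⟨rfl, rfl, hb⟩)
  · rcases hyz with rfl | ⟨h, -, -⟩ | ⟨j, -, h, -⟩ | ⟨j, hj, h, rfl⟩
    · exact Or.inr (Or.inr (Or.inl ⟨i, hi, rfl, rfl⟩))
    · exact absurd h (hF.bot_lt i).ne'
    · exact absurd h (hF.bot_lt i).ne'
    · have hb := hp.botTop_of_botMid_of_midTop i hi (hF.injective h ▸ hj)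
      exact Or.inr (Or.inl ⟨rfl, rfl, hb⟩)
  · obtain rfl := top_le_iff.mp (le_of_rel hyz)
    exact Or.inr (Or.inr (Or.inr ⟨i, hi, rfl, rfl⟩))

theorem rel_restrict (hF : IsFusionPow mid) (hp : p.Admissible) {x y z w : F}
    (hxy : p.Rel mid x y) (hzy : z ≤ y) (hwx : w ≤ x) (hwz : w ≤ z)
    (hmax : ∀ v, v ≤ x → v ≤ z → w ≤ v → v = w) : p.Rel mid w z := by
  rcases hxy with rfl | ⟨rfl, rfl, hb⟩ | ⟨i, hi, rfl, rfl⟩ | ⟨i, hi, rfl, rfl⟩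
  · exact Or.inl (hmax z hzy le_rfl hwz).symm
  · obtain rfl := le_bot_iff.mp hwx
    rcases hF.eq_bot_or_eq_top_or_exists z with rfl | rfl | ⟨j, rfl⟩
    · exact Or.inl rfl
    · exact Or.inr (Or.inl ⟨rfl, rfl, hb⟩)
    · exact Or.inr (Or.inr (Or.inl ⟨j, hp.botMid_of_botTop hb j, rfl, rfl⟩))
  · obtain rfl := le_bot_iff.mp hwx
    rcases hF.eq_bot_or_eq_of_le hzy with rfl | rfl
    · exact Or.inl rfl
    · exact Or.inr (Or.inr (Or.inl ⟨i, hi, rfl, rfl⟩))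
  · rcases hF.eq_bot_or_eq_top_or_exists z with rfl | rfl | ⟨j, rfl⟩
    · exact Or.inl (le_bot_iff.mp hwz)
    · obtain rfl := hmax (mid i) le_rfl le_top hwx
      exact Or.inr (Or.inr (Or.inr ⟨i, hi, rfl, rfl⟩))
    · by_cases hji : j = i
      · subst hji
        exact Or.inl (hmax (mid j) le_rfl le_rfl hwx).symm
      · obtain rfl : w = ⊥ := (hF.eq_bot_or_eq_of_le hwx).resolve_right
          fun h => hji (hF.eq_of_le (h.symm.trans_le hwz)).symm
        exact Or.inr (Or.inr (Or.inl ⟨j, hp.botMid_of_midTop i hi j hji, rfl, rfl⟩))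

def toTransferSystem (hF : IsFusionPow mid) (p : TransferProfile n) (hp : p.Admissible) :
    TransferSystemPoset F where
  rel := p.Rel mid
  refl _ := Or.inl rfl
  trans _ _ _ := rel_trans hF hp
  le_of_rel _ _ := le_of_rel
  restrict _ _ _ _ := rel_restrict hF hp

theorem rel_bot_top_iff (hF : IsFusionPow mid) (hbt : (⊥ : F) ≠ ⊤) :
    p.Rel mid ⊥ ⊤ ↔ p.botTop := by
  refine ⟨?_, fun hb => Or.inr (Or.inl ⟨rfl, rfl, hb⟩)⟩
  rintro (h | ⟨-, -, hb⟩ | ⟨i, -, -, h⟩ | ⟨i, -, h, -⟩)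
  · exact absurd h hbt
  · exact hb
  · exact absurd h (hF.lt_top i).ne'
  · exact absurd h (hF.bot_lt i).ne

theorem rel_bot_mid_iff (hF : IsFusionPow mid) (i : Fin n) :
    p.Rel mid ⊥ (mid i) ↔ i ∈ p.botMid := by
  refine ⟨?_, fun hi => Or.inr (Or.inr (Or.inl ⟨i, hi, rfl, rfl⟩))⟩
  rintro (h | ⟨-, h, -⟩ | ⟨j, hj, -, h⟩ | ⟨j, -, h, -⟩)
  · exact absurd h (hF.bot_lt i).ne
  · exact absurd h (hF.lt_top i).ne
  · exact hF.injective h ▸ hj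
  · exact absurd h (hF.bot_lt j).ne

theorem rel_mid_top_iff (hF : IsFusionPow mid) (i : Fin n) :
    p.Rel mid (mid i) ⊤ ↔ i ∈ p.midTop := by
  refine ⟨?_, fun hi => Or.inr (Or.inr (Or.inr ⟨i, hi, rfl, rfl⟩))⟩
  rintro (h | ⟨h, -, -⟩ | ⟨j, -, h, -⟩ | ⟨j, hj, h, -⟩)
  · exact absurd h (hF.lt_top i).ne
  · exact absurd h (hF.bot_lt i).ne'
  · exact absurd h (hF.bot_lt i).ne'
  · exact hF.injective h ▸ hj

end TransferProfile

namespace TransferSystemPoset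

variable {n : ℕ} {F : Type*} [PartialOrder F] [BoundedOrder F] {mid : Fin n → F}

def profile (mid : Fin n → F) (T : TransferSystemPoset F) : TransferProfile n where
  botTop := T.rel ⊥ ⊤
  botMid := {i | T.rel ⊥ (mid i)}
  midTop := {i | T.rel (mid i) ⊤}

theorem rel_eq_profile_rel (hF : IsFusionPow mid) (T : TransferSystemPoset F) :
    T.rel = (T.profile mid).Rel mid := by
  ext x y
  refine ⟨fun h => ?_, ?_⟩
  · have hle := T.le_of_rel x y h
    rcases hF.eq_bot_or_eq_top_or_exists x with rfl | rfl | ⟨i, rfl⟩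
    · rcases hF.eq_bot_or_eq_top_or_exists y with rfl | rfl | ⟨j, rfl⟩
      · exact Or.inl rfl
      · exact Or.inr (Or.inl ⟨rfl, rfl, h⟩)
      · exact Or.inr (Or.inr (Or.inl ⟨j, h, rfl, rfl⟩))
    · exact Or.inl (top_le_iff.mp hle).symm
    · rcases hF.eq_bot_or_eq_top_or_exists y with rfl | rfl | ⟨j, rfl⟩
      · exact absurd (le_bot_iff.mp hle) (hF.bot_lt i).ne'
      · exact Or.inr (Or.inr (Or.inr ⟨i, h, rfl, rfl⟩))
      · exact Or.inl (congrArg mid (hF.eq_of_le hle))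
  · rintro (rfl | ⟨rfl, rfl, h⟩ | ⟨i, h, rfl, rfl⟩ | ⟨i, h, rfl, rfl⟩)
    exacts [T.refl x, h, h, h]

theorem profile_injective (hF : IsFusionPow mid) :
    Function.Injective (profile (F := F) mid) := fun T₁ T₂ h =>
  TransferSystemPoset.ext (by rw [rel_eq_profile_rel hF, rel_eq_profile_rel hF T₂, h])

theorem admissible_profile (hF : IsFusionPow mid) (T : TransferSystemPoset F) :
    (T.profile mid).Admissible where
  botMid_of_botTop hb i :=
    T.restrict ⊥ ⊤ (mid i) ⊥ hb le_top le_rfl bot_le fun _ hv _ _ => le_bot_iff.mp hv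
  botMid_of_midTop i hi j hji := by
    refine T.restrict (mid i) ⊤ (mid j) ⊥ hi le_top bot_le bot_le fun v hvi hvj _ => ?_
    rcases hF.eq_bot_or_eq_of_le hvi with rfl | rfl
    · rfl
    · exact absurd (hF.eq_of_le hvj).symm hji
  botTop_of_botMid_of_midTop i hbi hit := T.trans ⊥ (mid i) ⊤ hbi hit

theorem profile_toTransferSystem (hF : IsFusionPow mid) (hbt : (⊥ : F) ≠ ⊤)
    {p : TransferProfile n} (hp : p.Admissible) : (p.toTransferSystem hF hp).profile mid = p := by
  ext
  · exact TransferProfile.rel_bot_top_iff hF hbt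
  · exact TransferProfile.rel_bot_mid_iff hF _
  · exact TransferProfile.rel_mid_top_iff hF _

def equivAdmissibleProfile (hF : IsFusionPow mid) (hbt : (⊥ : F) ≠ ⊤) :
    TransferSystemPoset F ≃ {p : TransferProfile n // p.Admissible} where
  toFun T := ⟨T.profile mid, admissible_profile hF T⟩
  invFun p := p.1.toTransferSystem hF p.2
  left_inv _ := profile_injective hF (profile_toTransferSystem hF hbt _)
  right_inv p := Subtype.ext (profile_toTransferSystem hF hbt p.2)

end TransferSystemPoset

abbrev TransferCode (n : ℕ) := Set (Fin n) ⊕ Set (Fin n) ⊕ Fin n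

namespace TransferCode

variable {n : ℕ}

def toProfile : TransferCode n → TransferProfile n
  | .inl B => ⟨True, Set.univ, B⟩
  | .inr (.inl A) => ⟨False, A, ∅⟩
  | .inr (.inr i) => ⟨False, {i}ᶜ, {i}⟩

theorem admissible_toProfile : ∀ c : TransferCode n, c.toProfile.Admissible
  | .inl _ => ⟨fun _ => Set.mem_univ, fun _ _ _ _ => Set.mem_univ _, fun _ _ _ => trivial⟩
  | .inr (.inl _) => ⟨False.elim, fun _ h => h.elim, fun _ _ h => h.elim⟩
  | .inr (.inr _) => ⟨False.elim, fun _ hi _ hji => hi ▸ hji, fun _ hi hi' => hi hi'⟩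

theorem toProfile_injective : Function.Injective (toProfile (n := n)) := by
  rintro (_ | _ | _) (_ | _ | _) h <;> simp_all [toProfile, TransferProfile.ext_iff]

theorem exists_toProfile_eq {p : TransferProfile n} (hp : p.Admissible) :
    ∃ c : TransferCode n, c.toProfile = p := by
  obtain ⟨b, A, B⟩ := p
  by_cases hb : b
  · refine ⟨.inl B, ?_⟩
    ext
    · exact iff_of_true trivial hb
    · exact iff_of_true trivial (hp.botMid_of_botTop hb _)
    · rfl
  by_cases hB : ∃ i, i ∈ B
  · obtain ⟨i, hi⟩ := hB
    have hiA : i ∉ A := fun hiA => hb (hp.botTop_of_botMid_of_midTop i hiA hi)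
    refine ⟨.inr (.inr i), ?_⟩
    ext j
    · exact iff_of_false id hb
    · exact ⟨hp.botMid_of_midTop i hi j, fun hjA hji => hiA (hji ▸ hjA)⟩
    · refine ⟨fun hji => hji ▸ hi, fun hj => ?_⟩
      by_contra hji
      exact hiA (hp.botMid_of_midTop j hj i (Ne.symm hji))
  · refine ⟨.inr (.inl A), ?_⟩
    ext j
    · exact iff_of_false id hb
    · rfl
    · exact iff_of_false id fun hj => hB ⟨j, hj⟩

noncomputable def equivAdmissibleProfile :
    TransferCode n ≃ {p : TransferProfile n // p.Admissible} :=
  Equiv.ofBijective (fun c => ⟨c.toProfile, c.admissible_toProfile⟩)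
    ⟨fun _ _ h => toProfile_injective (congrArg Subtype.val h),
      fun p => (exists_toProfile_eq p.2).imp fun _ => Subtype.ext⟩

theorem card : Nat.card (TransferCode n) = 2 ^ (n + 1) + n := by
  simp only [Nat.card_eq_fintype_card, Fintype.card_sum, Fintype.card_set, Fintype.card_fin]
  ring

end TransferCode

theorem stmt18_general (n : ℕ) (hn : 1 ≤ n)
    (F : Type*) [PartialOrder F] [BoundedOrder F]
    (mid : Fin n → F)
    (hstrict : ∀ i, ⊥ < mid i ∧ mid i < ⊤)
    (hsurj : ∀ x : F, x = ⊥ ∨ x = ⊤ ∨ ∃ i, x = mid i)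
    (hincomp : ∀ i j, i ≠ j → ¬ mid i ≤ mid j) :
    Nat.card (TransferSystemPoset F) = 2 ^ (n + 1) + n := by
  have hF : IsFusionPow mid :=
    { bot_lt := fun i => (hstrict i).1
      lt_top := fun i => (hstrict i).2
      eq_bot_or_eq_top_or_exists := hsurj
      eq_of_le := fun {i j} h => by_contra fun hij => hincomp i j hij h }
  have hbt : (⊥ : F) ≠ ⊤ := ((hF.bot_lt ⟨0, hn⟩).trans (hF.lt_top ⟨0, hn⟩)).ne
  rw [← TransferCode.card, Nat.card_congr
    ((TransferSystemPoset.equivAdmissibleProfile hF hbt).trans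
      TransferCode.equivAdmissibleProfile.symm)]

/-- for n ≥ 1, the number of transfer systems on the n-fold
iterated fusion [2]^{*n} is 2^{n+1} + n. Here `F` is the bounded poset
consisting of a least element ⊥, a greatest element ⊤, and n pairwise
incomparable middle elements `mid i` strictly between ⊥ and ⊤ (the
description of [2]^{*n}). -/
theorem stmt18 (n : ℕ) (hn : 1 ≤ n)
    (F : Type*) [PartialOrder F] [BoundedOrder F]
    (mid : Fin n → F)
    (hinj : Function.Injective mid)
    (hstrict : ∀ i, ⊥ < mid i ∧ mid i < ⊤)
    (hsurj : ∀ x : F, x = ⊥ ∨ x = ⊤ ∨ ∃ i, x = mid i)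
    (hincomp : ∀ i j, i ≠ j → ¬ mid i ≤ mid j) :
    Nat.card (TransferSystemPoset F) = 2 ^ (n + 1) + n :=
  stmt18_general n hn F mid hstrict hsurj hincomp
end

section
/- Let p be a prime number and let G = C_p × C_p be the rank two elementary Abelian group (e.g., G = ZMod p × ZMod p). Then the number of transfer systems on the subgroup lattice of G (equivalently, the number of G-transfer systems, since G is abelian so closure under conjugation is automatic) is exactly 2^{p+2} + p + 1. -/
namespace TransferSystem

variable {L M : Type*} [Lattice L] [Lattice M]

theorem ext {R S : TransferSystem L} (h : ∀ x y, R.rel x y ↔ S.rel x y) : R = S := by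
  obtain ⟨R⟩ := R
  obtain ⟨S⟩ := S
  obtain rfl : R = S := funext₂ fun x y => propext (h x y)
  rfl

def comap (e : L ≃o M) (R : TransferSystem M) : TransferSystem L where
  rel x y := R.rel (e x) (e y)
  refl x := R.refl (e x)
  trans x y z := R.trans (e x) (e y) (e z)
  le_of_rel x y h := e.le_iff_le.mp (R.le_of_rel _ _ h)
  restrict x y z h hyz := by
    simpa only [map_inf] using R.restrict (e x) (e y) (e z) h (e.monotone hyz)

def congr (e : L ≃o M) : TransferSystem L ≃ TransferSystem M where
  toFun := comap e.symm
  invFun := comap e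
  left_inv R := ext fun x y => by simp [comap]
  right_inv R := ext fun x y => by simp [comap]

end TransferSystem

class IsHeightTwo (L : Type*) [Lattice L] [BoundedOrder L] : Prop where
  eq_bot_or_isAtom_or_eq_top : ∀ x : L, x = ⊥ ∨ IsAtom x ∨ x = ⊤
  not_isAtom_top : ¬ IsAtom (⊤ : L)

namespace IsHeightTwo

variable {L : Type*} [Lattice L] [BoundedOrder L] [IsHeightTwo L]

theorem eq_or_eq_bot_or_eq_top_of_le {x y : L} (h : x ≤ y) : x = y ∨ x = ⊥ ∨ y = ⊤ := by
  rcases eq_bot_or_isAtom_or_eq_top x with rfl | hx | rfl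
  · exact .inr (.inl rfl)
  · rcases eq_bot_or_isAtom_or_eq_top y with rfl | hy | rfl
    · exact .inr (.inl (le_bot_iff.mp h))
    · exact .inl ((hy.le_iff.mp h).resolve_left hx.ne_bot)
    · exact .inr (.inr rfl)
  · exact .inr (.inr (top_le_iff.mp h))

end IsHeightTwo

-- `t` records `⊥ → ⊤`, `A` the atoms receiving a transfer from `⊥`,
-- `B` the atoms transferring to `⊤`.
structure IsTransferTriple {α : Type*} (t : Prop) (A B : Set α) : Prop where
  eq_univ_of_bot_top : t → A = Set.univ
  mem_of_ne : ∀ a ∈ B, ∀ b ≠ a, b ∈ A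
  bot_top_of_mem : ∀ a ∈ A, a ∈ B → t

abbrev TransferTriple (α : Type*) : Type _ :=
  {x : Prop × Set α × Set α // IsTransferTriple x.1 x.2.1 x.2.2}

section TransferTriple

variable {α : Type*}

theorem isTransferTriple_iff {t : Prop} {A B : Set α} :
    IsTransferTriple t A B ↔
      (t ∧ A = Set.univ) ∨ (¬t ∧ B = ∅) ∨ ∃ a, ¬t ∧ A = {a}ᶜ ∧ B = {a} := by
  constructor
  · intro h
    by_cases ht : t
    · exact .inl ⟨ht, h.eq_univ_of_bot_top ht⟩
    obtain hB | ⟨a, ha⟩ := B.eq_empty_or_nonempty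
    · exact .inr (.inl ⟨ht, hB⟩)
    have hA : A = {a}ᶜ := by
      ext b
      refine ⟨?_, h.mem_of_ne a ha b⟩
      rintro hb rfl
      exact ht (h.bot_top_of_mem b hb ha)
    refine .inr (.inr ⟨a, ht, hA, ?_⟩)
    refine Set.eq_singleton_iff_unique_mem.mpr ⟨ha, fun b hb => by_contra fun hba => ?_⟩
    exact ht (h.bot_top_of_mem b (hA ▸ hba) hb)
  · rintro (⟨ht, rfl⟩ | ⟨ht, rfl⟩ | ⟨a, ht, rfl, rfl⟩)
    · exact ⟨fun _ => rfl, fun _ _ _ _ => trivial, fun _ _ _ => ht⟩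
    · exact ⟨ht.elim, fun _ h => h.elim, fun _ _ h => h.elim⟩
    · exact ⟨ht.elim, by rintro _ rfl _ hab; exact hab, fun _ hA hB => (hA hB).elim⟩

noncomputable def sumEquivTransferTriple : Set α ⊕ Set α ⊕ α ≃ TransferTriple α :=
  Equiv.ofBijective
    (fun
      | .inl B => ⟨(True, Set.univ, B), isTransferTriple_iff.mpr (.inl ⟨trivial, rfl⟩)⟩
      | .inr (.inl A) => ⟨(False, A, ∅), isTransferTriple_iff.mpr (.inr (.inl ⟨id, rfl⟩))⟩
      | .inr (.inr a) =>
          ⟨(False, {a}ᶜ, {a}), isTransferTriple_iff.mpr (.inr (.inr ⟨a, id, rfl, rfl⟩))⟩)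
    ⟨by
      rintro (B | A | a) (B' | A' | a') h <;> simp_all [Subtype.ext_iff],
    by
      rintro ⟨⟨t, A, B⟩, h⟩
      obtain ⟨ht, rfl⟩ | ⟨ht, rfl⟩ | ⟨a, ht, rfl, rfl⟩ := isTransferTriple_iff.mp h
      · exact ⟨.inl B, by simpa using ht⟩
      · exact ⟨.inr (.inl A), by simpa using ht⟩
      · exact ⟨.inr (.inr a), by simpa using ht⟩⟩

theorem card_transferTriple [Finite α] :
    Nat.card (TransferTriple α) = 2 ^ (Nat.card α + 1) + Nat.card α := by
  have := Fintype.ofFinite α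
  rw [← Nat.card_congr sumEquivTransferTriple]
  simp only [Nat.card_eq_fintype_card, Fintype.card_sum, Fintype.card_set]
  ring

end TransferTriple

namespace TransferSystem

section HeightTwo

variable {L : Type*} [Lattice L] [BoundedOrder L]

def TripleRel (t : Prop) (A B : Set {a : L // IsAtom a}) (x y : L) : Prop :=
  x = y ∨ (x = ⊥ ∧ y = ⊤ ∧ t) ∨ (x = ⊥ ∧ ∃ hy : IsAtom y, ⟨y, hy⟩ ∈ A) ∨
    (∃ hx : IsAtom x, ⟨x, hx⟩ ∈ B ∧ y = ⊤)

variable {t : Prop} {A B : Set {a : L // IsAtom a}}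

theorem TripleRel.le {x y : L} (h : TripleRel t A B x y) : x ≤ y := by
  rcases h with rfl | ⟨rfl, -⟩ | ⟨rfl, -⟩ | ⟨-, -, rfl⟩
  · exact le_rfl
  · exact bot_le
  · exact bot_le
  · exact le_top

theorem TripleRel.trans {x y z : L} (hxy : TripleRel t A B x y) (hyz : TripleRel t A B y z)
    (h : IsTransferTriple t A B) : TripleRel t A B x z := by
  have eq_of_eq_top {y z : L} (hyz : TripleRel t A B y z) (hy : y = ⊤) : z = y :=
    (top_le_iff.mp (hy ▸ hyz.le)).trans hy.symm
  rcases hxy with rfl | hxy | ⟨rfl, hy, hA⟩ | hxy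
  · exact hyz
  · rw [eq_of_eq_top hyz hxy.2.1]
    exact .inr (.inl hxy)
  · rcases hyz with rfl | ⟨rfl, -⟩ | ⟨rfl, -⟩ | ⟨_, hB, rfl⟩
    · exact .inr (.inr (.inl ⟨rfl, hy, hA⟩))
    · exact (hy.ne_bot rfl).elim
    · exact (hy.ne_bot rfl).elim
    · exact .inr (.inl ⟨rfl, rfl, h.bot_top_of_mem _ hA hB⟩)
  · rw [eq_of_eq_top hyz hxy.2.2]
    exact .inr (.inr (.inr hxy))

def toTriple (R : TransferSystem L) : TransferTriple {a : L // IsAtom a} :=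
  ⟨(R.rel ⊥ ⊤, {a | R.rel ⊥ a}, {a | R.rel a ⊤}),
    { eq_univ_of_bot_top := fun ht => Set.eq_univ_of_forall fun a => by
        simpa using R.restrict ⊥ a ⊤ ht le_top
      mem_of_ne := fun a ha b hba => by
        simpa [disjoint_iff.mp (a.2.disjoint_of_ne b.2 fun h => hba (Subtype.ext h).symm)]
          using R.restrict a b ⊤ ha le_top
      bot_top_of_mem := fun a hA hB => R.trans _ _ _ hA hB }⟩

variable [IsHeightTwo L]

theorem TripleRel.restrict {x y z : L} (hxz : TripleRel t A B x z) (hyz : y ≤ z)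
    (h : IsTransferTriple t A B) : TripleRel t A B (x ⊓ y) y := by
  rcases hxz with rfl | ⟨rfl, rfl, ht⟩ | ⟨rfl, hz, hA⟩ | ⟨hx, hB, rfl⟩
  · rw [inf_eq_right.mpr hyz]
    exact .inl rfl
  · rw [bot_inf_eq]
    rcases IsHeightTwo.eq_bot_or_isAtom_or_eq_top y with rfl | hy | rfl
    · exact .inl rfl
    · exact .inr (.inr (.inl ⟨rfl, hy, h.eq_univ_of_bot_top ht ▸ trivial⟩))
    · exact .inr (.inl ⟨rfl, rfl, ht⟩)
  · rw [bot_inf_eq]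
    rcases hz.le_iff.mp hyz with rfl | rfl
    · exact .inl rfl
    · exact .inr (.inr (.inl ⟨rfl, hz, hA⟩))
  · rcases IsHeightTwo.eq_bot_or_isAtom_or_eq_top y with rfl | hy | rfl
    · rw [inf_bot_eq]
      exact .inl rfl
    · by_cases hxy : x = y
      · rw [hxy, inf_idem]
        exact .inl rfl
      rw [disjoint_iff.mp (hx.disjoint_of_ne hy hxy)]
      have hyx : (⟨y, hy⟩ : {a : L // IsAtom a}) ≠ ⟨x, hx⟩ :=
        fun h => hxy (congrArg Subtype.val h).symm
      exact .inr (.inr (.inl ⟨rfl, hy, h.mem_of_ne _ hB _ hyx⟩))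
    · rw [inf_top_eq]
      exact .inr (.inr (.inr ⟨hx, hB, rfl⟩))

def ofTriple (t : Prop) (A B : Set {a : L // IsAtom a}) (h : IsTransferTriple t A B) :
    TransferSystem L where
  rel := TripleRel t A B
  refl _ := .inl rfl
  trans _ _ _ hxy hyz := hxy.trans hyz h
  le_of_rel _ _ := TripleRel.le
  restrict _ _ _ hxz hyz := hxz.restrict hyz h

theorem rel_iff_tripleRel (R : TransferSystem L) {x y : L} :
    R.rel x y ↔ TripleRel (R.rel ⊥ ⊤) {a | R.rel ⊥ a} {a | R.rel a ⊤} x y := by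
  constructor
  · intro h
    rcases IsHeightTwo.eq_or_eq_bot_or_eq_top_of_le (R.le_of_rel x y h) with rfl | rfl | rfl
    · exact .inl rfl
    · rcases IsHeightTwo.eq_bot_or_isAtom_or_eq_top y with rfl | hy | rfl
      · exact .inl rfl
      · exact .inr (.inr (.inl ⟨rfl, hy, h⟩))
      · exact .inr (.inl ⟨rfl, rfl, h⟩)
    · rcases IsHeightTwo.eq_bot_or_isAtom_or_eq_top x with rfl | hx | rfl
      · exact .inr (.inl ⟨rfl, rfl, h⟩)
      · exact .inr (.inr (.inr ⟨hx, h, rfl⟩))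
      · exact .inl rfl
  · rintro (rfl | ⟨rfl, rfl, h⟩ | ⟨rfl, _, h⟩ | ⟨_, h, rfl⟩)
    · exact R.refl x
    all_goals exact h

theorem tripleRel_bot_iff (a : {a : L // IsAtom a}) : TripleRel t A B ⊥ a ↔ a ∈ A := by
  refine ⟨?_, fun hA => .inr (.inr (.inl ⟨rfl, a.2, hA⟩))⟩
  rintro (h | ⟨-, h, -⟩ | ⟨-, _, hA⟩ | ⟨h, -⟩)
  · exact (a.2.ne_bot h.symm).elim
  · exact (IsHeightTwo.not_isAtom_top (h ▸ a.2)).elim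
  · exact hA
  · exact (h.ne_bot rfl).elim

theorem tripleRel_top_iff (a : {a : L // IsAtom a}) : TripleRel t A B a ⊤ ↔ a ∈ B := by
  refine ⟨?_, fun hB => .inr (.inr (.inr ⟨a.2, hB, rfl⟩))⟩
  rintro (h | ⟨h, -⟩ | ⟨h, -⟩ | ⟨_, hB, -⟩)
  · exact (IsHeightTwo.not_isAtom_top (h ▸ a.2)).elim
  · exact (a.2.ne_bot h).elim
  · exact (a.2.ne_bot h).elim
  · exact hB

variable [Nontrivial L]

theorem tripleRel_bot_top_iff : TripleRel t A B ⊥ ⊤ ↔ t := by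
  refine ⟨?_, fun ht => .inr (.inl ⟨rfl, rfl, ht⟩)⟩
  rintro (h | ⟨-, -, ht⟩ | ⟨-, h, -⟩ | ⟨h, -⟩)
  · exact (bot_ne_top h).elim
  · exact ht
  · exact (IsHeightTwo.not_isAtom_top h).elim
  · exact (h.ne_bot rfl).elim

def equivTransferTriple : TransferSystem L ≃ TransferTriple {a : L // IsAtom a} where
  toFun := toTriple
  invFun s := ofTriple s.1.1 s.1.2.1 s.1.2.2 s.2
  left_inv R := ext fun _ _ => (rel_iff_tripleRel R).symm
  right_inv := by
    rintro ⟨⟨t, A, B⟩, h⟩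
    refine Subtype.ext (Prod.ext (propext tripleRel_bot_top_iff) (Prod.ext ?_ ?_))
    · exact Set.ext tripleRel_bot_iff
    · exact Set.ext tripleRel_top_iff

theorem card_eq_of_isHeightTwo [Finite {a : L // IsAtom a}] :
    Nat.card (TransferSystem L) =
      2 ^ (Nat.card {a : L // IsAtom a} + 1) + Nat.card {a : L // IsAtom a} := by
  rw [Nat.card_congr equivTransferTriple, card_transferTriple]

end HeightTwo

end TransferSystem

section Submodule

open Module

variable {K V : Type*} [DivisionRing K] [AddCommGroup V] [Module K V]

theorem Submodule.isHeightTwo_of_finrank_eq_two (h : finrank K V = 2) :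
    IsHeightTwo (Submodule K V) := by
  have := FiniteDimensional.of_finrank_eq_succ h
  refine ⟨fun S => ?_, fun htop => ?_⟩
  · have hS : finrank K S ≤ 2 := h ▸ S.finrank_le
    interval_cases hd : finrank K S
    · exact .inl (Submodule.finrank_eq_zero.mp hd)
    · exact .inr (.inl (Submodule.isAtom_iff_finrank_eq_one.mpr hd))
    · exact .inr (.inr (Submodule.eq_top_of_finrank_eq (hd.trans h.symm)))
  · have := Submodule.isAtom_iff_finrank_eq_one.mp htop
    rw [finrank_top, h] at this
    exact absurd this (by norm_num)

theorem Submodule.nontrivial_of_finrank_eq_two (h : finrank K V = 2) :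
    Nontrivial (Submodule K V) :=
  have := Module.nontrivial_of_finrank_eq_succ h
  inferInstance

-- The atoms are the lines, i.e. the points of the projective line.
theorem Submodule.card_isAtom_of_finrank_eq_two [Finite K] (h : finrank K V = 2) :
    Nat.card {S : Submodule K V // IsAtom S} = Nat.card K + 1 := by
  rw [Nat.card_congr (Equiv.subtypeEquivRight fun _ => Submodule.isAtom_iff_finrank_eq_one),
    ← Nat.card_congr (Projectivization.equivSubmodule K V),
    Projectivization.card_of_finrank_two K V h]

theorem TransferSystem.card_submodule_of_finrank_eq_two [Finite K] (h : finrank K V = 2) :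
    Nat.card (TransferSystem (Submodule K V)) = 2 ^ (Nat.card K + 2) + Nat.card K + 1 := by
  have := Submodule.isHeightTwo_of_finrank_eq_two h
  have := Submodule.nontrivial_of_finrank_eq_two h
  have hcard := Submodule.card_isAtom_of_finrank_eq_two h
  have : Finite {S : Submodule K V // IsAtom S} := Nat.finite_of_card_ne_zero (by omega)
  rw [card_eq_of_isHeightTwo, hcard]
  ring

end Submodule

/-- for a prime p, the number of transfer systems on the
subgroup lattice of C_p × C_p = ZMod p × ZMod p (equivalently, of G-transfer
systems for G = C_p × C_p, since G is abelian) is exactly 2^{p+2} + p + 1. -/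
theorem stmt19 (p : ℕ) (hp : p.Prime) :
    Nat.card (TransferSystem (AddSubgroup (ZMod p × ZMod p))) =
      2 ^ (p + 2) + p + 1 := by
  have : Fact p.Prime := ⟨hp⟩
  rw [Nat.card_congr (TransferSystem.congr (AddSubgroup.toZModSubmodule p)),
    TransferSystem.card_submodule_of_finrank_eq_two (by simp), Nat.card_zmod]
end
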